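/- Assume each q_i is Lipschitz continuous and let f be the bounded fractal function. For m ∈ ℕ define the moments f_m = ∫_{x_0}^{x_N} x^m f(x) dx and Q_m = ∫_{x_0}^{x_N} x^m Q(x) dx, where Q : I → ℝ is given by Q(x) = q_i(L_i^{-1}(x)) for x ∈ I_i. Then for every m ≥ 1, f_m = (∑_{k=0}^{m−1} C(m,k) f_k ∑_{i=1}^N α_i a_i^{k+1} b_i^{m−k} + Q_m) / (1 − ∑_{i=1}^N α_i a_i^{m+1}), where C(m,k) is the binomial coefficient; the denominator is nonzero. -/

import Mathlib

open Set

noncomputable def aC (x : ℕ → ℝ) (N i : ℕ) : ℝ := (x (i + 1) - x i) / (x N - x 0)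

noncomputable def bC (x : ℕ → ℝ) (N i : ℕ) : ℝ := (x N * x i - x 0 * x (i + 1)) / (x N - x 0)

/-- The affine map `L i t = a i * t + b i`. -/
noncomputable def Lm (x : ℕ → ℝ) (N i : ℕ) (t : ℝ) : ℝ := aC x N i * t + bC x N i

/-- The inverse `L i ⁻¹ t = (t - b i) / a i` of the affine map `L i`. -/
noncomputable def LmInv (x : ℕ → ℝ) (N i : ℕ) (t : ℝ) : ℝ := (t - bC x N i) / aC x N i

open MeasureTheory Filter Topology
open scoped NNReal

/-!
Rescaling the piece `[x i, x (i + 1)]` onto `[x 0, x N]` by `L i` and expanding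
`(a i * s + b i) ^ m` binomially expresses the `m`-th moment of `f` over that piece through
`α i`, `a i`, `b i` and the moments `f_0, …, f_m`, plus the `m`-th moment of `Q` over the piece.
Summing over the pieces gives a linear equation for `f_m` whose coefficient
`1 - ∑ α i * a i ^ (m + 1)` is positive, since the `a i` are positive weights of total mass `1`
and `|α i| < 1`.

Since the integral of a non-integrable function is `0`, this needs `f` to be integrable. It is
bounded, and measurable on `[x 0, x N)` as the pointwise limit of the iterates, started at `0`, of
the contraction `g ↦ α i * g ∘ (L i)⁻¹ + q i ∘ (L i)⁻¹` (on the `i`-th piece), which preserves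
measurability.
-/
theorem aemeasurable_restrict_of_eq_mul_comp_add {β : Type*} [MeasurableSpace β]
    {μ : Measure β} {s : Set β} (hs : MeasurableSet s) {f a r : β → ℝ} {σ : β → β}
    {A : ℝ≥0} {M : ℝ} (ha : Measurable a) (hσ : Measurable σ) (hr : Measurable r)
    (hσs : MapsTo σ s s) (hA : A < 1) (haA : ∀ t ∈ s, |a t| ≤ A) (hfM : ∀ t ∈ s, |f t| ≤ M)
    (hf : ∀ t ∈ s, f t = a t * f (σ t) + r t) :
    AEMeasurable f (μ.restrict s) := by
  set T : (β → ℝ) → β → ℝ := fun g t => a t * g (σ t) + r t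
  have hmeas : ∀ n, Measurable (T^[n] 0) := by
    intro n
    induction n with
    | zero => exact measurable_const
    | succ n ih =>
      rw [Function.iterate_succ_apply']
      exact (ha.mul (ih.comp hσ)).add hr
  have hclose : ∀ n, ∀ t ∈ s, |T^[n] 0 t - f t| ≤ A ^ n * M := by
    intro n
    induction n with
    | zero => simpa using hfM
    | succ n ih =>
      intro t ht
      calc |T^[n + 1] 0 t - f t|
          = |a t| * |T^[n] 0 (σ t) - f (σ t)| := by
            rw [Function.iterate_succ_apply', hf t ht, ← abs_mul]
            congr 1
            simp only [T]
            ring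
        _ ≤ A * (A ^ n * M) := mul_le_mul (haA t ht) (ih _ (hσs ht)) (abs_nonneg _) A.coe_nonneg
        _ = A ^ (n + 1) * M := by ring
  refine aemeasurable_of_tendsto_metrizable_ae' (fun n => (hmeas n).aemeasurable) ?_
  refine (ae_restrict_iff' hs).2 (ae_of_all _ fun t ht => ?_)
  have hgeom : Tendsto (fun n => (A : ℝ) ^ n * M) atTop (𝓝 0) := by
    simpa using (tendsto_pow_atTop_nhds_zero_of_lt_one A.coe_nonneg hA).mul_const M
  exact tendsto_iff_norm_sub_tendsto_zero.2
    (squeeze_zero (fun _ => norm_nonneg _) (fun n => hclose n t ht) hgeom)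

theorem abs_sum_mul_pow_lt_one {ι : Type*} {s : Finset ι} (hs : s.Nonempty) {w α : ι → ℝ}
    (hw : ∀ i ∈ s, 0 < w i) (hw1 : ∑ i ∈ s, w i = 1) (hα : ∀ i ∈ s, |α i| < 1) (n : ℕ) :
    |∑ i ∈ s, α i * w i ^ (n + 1)| < 1 := by
  calc |∑ i ∈ s, α i * w i ^ (n + 1)|
      ≤ ∑ i ∈ s, |α i * w i ^ (n + 1)| := Finset.abs_sum_le_sum_abs _ _
    _ < ∑ i ∈ s, w i := by
      refine Finset.sum_lt_sum_of_nonempty hs fun i hi => ?_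
      have hw_le : w i ≤ 1 := hw1 ▸ Finset.single_le_sum (fun j hj => (hw j hj).le) hi
      have hpow := pow_pos (hw i hi) (n + 1)
      rw [abs_mul, abs_of_pos hpow]
      calc |α i| * w i ^ (n + 1) < 1 * w i ^ (n + 1) := mul_lt_mul_of_pos_right (hα i hi) hpow
        _ ≤ w i := by rw [one_mul]; exact pow_le_of_le_one (hw i hi).le hw_le n.succ_ne_zero
    _ = 1 := hw1

theorem integral_affine_pow_mul {g : ℝ → ℝ} {u v : ℝ} (hg : IntervalIntegrable g volume u v)
    (a b : ℝ) (m : ℕ) :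
    ∫ s in u..v, (a * s + b) ^ m * g s =
      ∑ k ∈ Finset.range (m + 1), (m.choose k : ℝ) * a ^ k * b ^ (m - k) *
        ∫ s in u..v, s ^ k * g s := by
  have hexpand : ∀ s, (a * s + b) ^ m * g s = ∑ k ∈ Finset.range (m + 1),
      (m.choose k : ℝ) * a ^ k * b ^ (m - k) * (s ^ k * g s) := by
    intro s
    rw [add_pow, Finset.sum_mul]
    exact Finset.sum_congr rfl fun k _ => by ring
  simp_rw [hexpand]
  rw [intervalIntegral.integral_finsetSum fun k _ =>
    (hg.continuousOn_mul (continuous_pow k).continuousOn).const_mul _]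
  simp_rw [intervalIntegral.integral_const_mul]

section Partition

variable {N : ℕ} {x : ℕ → ℝ}

theorem exists_mem_Ico_succ_of_mem_Ico {t : ℝ} (ht : t ∈ Ico (x 0) (x N)) :
    ∃ i < N, t ∈ Ico (x i) (x (i + 1)) := by
  induction N with
  | zero => exact absurd (ht.1.trans_lt ht.2) (lt_irrefl _)
  | succ n ih =>
    by_cases htn : t < x n
    · obtain ⟨i, hi, hti⟩ := ih ⟨ht.1, htn⟩
      exact ⟨i, by omega, hti⟩
    · exact ⟨n, n.lt_succ_self, not_lt.1 htn, ht.2⟩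

theorem partition_lt (hx : ∀ i, i < N → x i < x (i + 1)) {i j : ℕ} (hij : i < j) (hj : j ≤ N) :
    x i < x j :=
  strictMonoOn_Iic_of_lt_succ hx (hij.le.trans hj) hj hij

theorem partition_le (hx : ∀ i, i < N → x i < x (i + 1)) {i j : ℕ} (hij : i ≤ j) (hj : j ≤ N) :
    x i ≤ x j :=
  (strictMonoOn_Iic_of_lt_succ hx).monotoneOn (hij.trans hj) hj hij

theorem eq_of_mem_Ico_succ (hx : ∀ i, i < N → x i < x (i + 1)) {i j : ℕ} (hi : i < N)
    (hj : j < N) {t : ℝ} (hti : t ∈ Ico (x i) (x (i + 1))) (htj : t ∈ Ico (x j) (x (j + 1))) :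
    i = j := by
  by_contra hne
  rcases Nat.lt_or_gt_of_ne hne with h | h
  · exact absurd (hti.2.trans_le (partition_le hx h hj.le)) (not_lt.2 htj.1)
  · exact absurd (htj.2.trans_le (partition_le hx h hi.le)) (not_lt.2 hti.1)

theorem Icc_succ_subset (hx : ∀ i, i < N → x i < x (i + 1)) {i : ℕ} (hi : i < N) :
    Icc (x i) (x (i + 1)) ⊆ Icc (x 0) (x N) :=
  Icc_subset_Icc (partition_le hx i.zero_le hi.le) (partition_le hx hi le_rfl)

noncomputable def piecewiseIco (x : ℕ → ℝ) (N : ℕ) (F : ℕ → ℝ → ℝ) (t : ℝ) : ℝ :=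
  ∑ i ∈ Finset.range N, (Ico (x i) (x (i + 1))).indicator (F i) t

theorem piecewiseIco_eq (hx : ∀ i, i < N → x i < x (i + 1)) {F : ℕ → ℝ → ℝ} {i : ℕ}
    (hi : i < N) {t : ℝ} (ht : t ∈ Ico (x i) (x (i + 1))) : piecewiseIco x N F t = F i t := by
  rw [piecewiseIco, Finset.sum_eq_single_of_mem i (Finset.mem_range.2 hi), indicator_of_mem ht]
  intro j hj hji
  exact indicator_of_notMem
    (fun htj => hji (eq_of_mem_Ico_succ hx (Finset.mem_range.1 hj) hi htj ht)) _

theorem measurable_piecewiseIco {F : ℕ → ℝ → ℝ}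
    (hF : ∀ i, i < N → ContinuousOn (F i) (Ico (x i) (x (i + 1)))) :
    Measurable (piecewiseIco x N F) := by
  refine Finset.measurable_sum _ fun i hi => ?_
  rw [← piecewise_eq_indicator]
  exact (hF i (Finset.mem_range.1 hi)).measurable_piecewise continuousOn_const measurableSet_Ico

end Partition

section AffineMaps

variable {N : ℕ} {x : ℕ → ℝ}

theorem aC_pos (hx : ∀ i, i < N → x i < x (i + 1)) {i : ℕ} (hi : i < N) : 0 < aC x N i :=
  div_pos (sub_pos.2 (hx i hi)) (sub_pos.2 (partition_lt hx (Nat.zero_lt_of_lt hi) le_rfl))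

theorem sum_aC (hx : ∀ i, i < N → x i < x (i + 1)) (hN : 0 < N) :
    ∑ i ∈ Finset.range N, aC x N i = 1 := by
  simp_rw [aC, ← Finset.sum_div, Finset.sum_range_sub x]
  exact div_self (sub_pos.2 (partition_lt hx hN le_rfl)).ne'

theorem Lm_x_zero (h0N : x 0 ≠ x N) (i : ℕ) : Lm x N i (x 0) = x i := by
  have := sub_ne_zero.2 h0N.symm
  rw [Lm, aC, bC]
  field_simp
  ring

theorem Lm_x_N (h0N : x 0 ≠ x N) (i : ℕ) : Lm x N i (x N) = x (i + 1) := by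
  have := sub_ne_zero.2 h0N.symm
  rw [Lm, aC, bC]
  field_simp
  ring

theorem LmInv_Lm {i : ℕ} (ha : aC x N i ≠ 0) (t : ℝ) : LmInv x N i (Lm x N i t) = t := by
  rw [Lm, LmInv]
  field_simp
  ring

theorem Lm_LmInv {i : ℕ} (ha : aC x N i ≠ 0) (t : ℝ) : Lm x N i (LmInv x N i t) = t := by
  rw [Lm, LmInv]
  field_simp
  ring

theorem continuous_Lm (i : ℕ) : Continuous (Lm x N i) :=
  (continuous_const.mul continuous_id).add continuous_const

theorem continuous_LmInv (i : ℕ) : Continuous (LmInv x N i) :=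
  (continuous_id.sub continuous_const).div_const _

theorem mapsTo_Lm_Ico (hx : ∀ i, i < N → x i < x (i + 1)) {i : ℕ} (hi : i < N) :
    MapsTo (Lm x N i) (Ico (x 0) (x N)) (Ico (x i) (x (i + 1))) := by
  have h0N := (partition_lt hx (Nat.zero_lt_of_lt hi) le_rfl).ne
  have hmono : StrictMono (Lm x N i) := fun s t hst =>
    add_lt_add_left (mul_lt_mul_of_pos_left hst (aC_pos hx hi)) _
  simpa only [Lm_x_zero h0N, Lm_x_N h0N] using hmono.mapsTo_Ico (a := x 0) (b := x N)

theorem LmInv_x (hx : ∀ i, i < N → x i < x (i + 1)) {i : ℕ} (hi : i < N) :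
    LmInv x N i (x i) = x 0 ∧ LmInv x N i (x (i + 1)) = x N := by
  have h0N := (partition_lt hx (Nat.zero_lt_of_lt hi) le_rfl).ne
  have ha := (aC_pos hx hi).ne'
  rw [← Lm_x_zero h0N i, ← Lm_x_N h0N i, LmInv_Lm ha, LmInv_Lm ha]
  exact ⟨rfl, rfl⟩

theorem strictMono_LmInv (hx : ∀ i, i < N → x i < x (i + 1)) {i : ℕ} (hi : i < N) :
    StrictMono (LmInv x N i) := fun _ _ hst =>
  div_lt_div_of_pos_right (sub_lt_sub_right hst _) (aC_pos hx hi)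

theorem mapsTo_LmInv_Ico (hx : ∀ i, i < N → x i < x (i + 1)) {i : ℕ} (hi : i < N) :
    MapsTo (LmInv x N i) (Ico (x i) (x (i + 1))) (Ico (x 0) (x N)) := by
  simpa only [LmInv_x hx hi] using (strictMono_LmInv hx hi).mapsTo_Ico (a := x i) (b := x (i + 1))

theorem mapsTo_LmInv_Icc (hx : ∀ i, i < N → x i < x (i + 1)) {i : ℕ} (hi : i < N) :
    MapsTo (LmInv x N i) (Icc (x i) (x (i + 1))) (Icc (x 0) (x N)) := by
  simpa only [LmInv_x hx hi] using
    (strictMono_LmInv hx hi).monotone.mapsTo_Icc (a := x i) (b := x (i + 1))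

theorem integral_Lm_piece (h0N : x 0 ≠ x N) (i : ℕ) (g : ℝ → ℝ) :
    ∫ t in x i..x (i + 1), g t = aC x N i * ∫ s in x 0..x N, g (Lm x N i s) := by
  have h := intervalIntegral.smul_integral_comp_mul_add (f := g) (a := x 0) (b := x N)
    (aC x N i) (bC x N i)
  change aC x N i * ∫ s in x 0..x N, g (Lm x N i s) =
    ∫ t in Lm x N i (x 0)..Lm x N i (x N), g t at h
  rw [h, Lm_x_zero h0N, Lm_x_N h0N]

theorem integral_pow_mul_piece_eq (h0N : x 0 < x N) (i : ℕ) {g h : ℝ → ℝ}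
    (hgh : EqOn (fun s => g (Lm x N i s)) h (Ioo (x 0) (x N))) (m : ℕ) :
    ∫ t in x i..x (i + 1), t ^ m * g t = aC x N i * ∫ s in x 0..x N, Lm x N i s ^ m * h s := by
  rw [integral_Lm_piece h0N.ne]
  congr 1
  exact intervalIntegral.integral_congr_Ioo_of_le h0N.le fun s hs => by
    simp only [hgh hs]

end AffineMaps

section Fractal

variable {N : ℕ} {x : ℕ → ℝ} {α : ℕ → ℝ} {q : ℕ → ℝ → ℝ} {f Qf : ℝ → ℝ}

theorem aemeasurable_restrict_Ico_of_fractal (hx : ∀ i, i < N → x i < x (i + 1))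
    (hα : ∀ i, i < N → |α i| < 1) (hq : ∀ i, i < N → ContinuousOn (q i) (Icc (x 0) (x N)))
    (hfb : ∃ M, ∀ t ∈ Icc (x 0) (x N), |f t| ≤ M)
    (hfe : ∀ i, i < N → ∀ t ∈ Ico (x 0) (x N), f (Lm x N i t) = α i * f t + q i t) :
    AEMeasurable f (volume.restrict (Ico (x 0) (x N))) := by
  obtain ⟨M, hM⟩ := hfb
  set A : ℝ≥0 := (Finset.range N).sup fun i => ‖α i‖₊
  have hA : A < 1 := (Finset.sup_lt_iff zero_lt_one).2 fun i hi => by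
    simpa [← NNReal.coe_lt_coe] using hα i (Finset.mem_range.1 hi)
  have hpiece : ∀ t ∈ Ico (x 0) (x N), ∃ i < N, t ∈ Ico (x i) (x (i + 1)) ∧
      ∀ F : ℕ → ℝ → ℝ, piecewiseIco x N F t = F i t := fun t ht => by
    obtain ⟨i, hi, hti⟩ := exists_mem_Ico_succ_of_mem_Ico ht
    exact ⟨i, hi, hti, fun F => piecewiseIco_eq hx hi hti⟩
  refine aemeasurable_restrict_of_eq_mul_comp_add measurableSet_Ico
    (a := piecewiseIco x N fun i _ => α i) (σ := piecewiseIco x N (LmInv x N))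
    (r := piecewiseIco x N fun i t => q i (LmInv x N i t))
    (measurable_piecewiseIco fun _ _ => continuousOn_const)
    (measurable_piecewiseIco fun i _ => (continuous_LmInv i).continuousOn)
    (measurable_piecewiseIco fun i hi => (hq i hi).comp (continuous_LmInv i).continuousOn
      ((mapsTo_LmInv_Ico hx hi).mono_right Ico_subset_Icc_self))
    ?_ hA ?_ (fun t ht => hM t (Ico_subset_Icc_self ht)) ?_
  · intro t ht
    obtain ⟨i, hi, hti, hglue⟩ := hpiece t ht
    exact hglue _ ▸ mapsTo_LmInv_Ico hx hi hti
  · intro t ht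
    obtain ⟨i, hi, -, hglue⟩ := hpiece t ht
    exact hglue _ ▸ Finset.le_sup (f := fun i => ‖α i‖₊) (Finset.mem_range.2 hi)
  · intro t ht
    obtain ⟨i, hi, hti, hglue⟩ := hpiece t ht
    simp only [hglue]
    conv_lhs => rw [← Lm_LmInv (aC_pos hx hi).ne' t]
    exact hfe i hi _ (mapsTo_LmInv_Ico hx hi hti)

theorem integrableOn_Icc_of_fractal (hx : ∀ i, i < N → x i < x (i + 1))
    (hα : ∀ i, i < N → |α i| < 1) (hq : ∀ i, i < N → ContinuousOn (q i) (Icc (x 0) (x N)))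
    (hfb : ∃ M, ∀ t ∈ Icc (x 0) (x N), |f t| ≤ M)
    (hfe : ∀ i, i < N → ∀ t ∈ Ico (x 0) (x N), f (Lm x N i t) = α i * f t + q i t) :
    IntegrableOn f (Icc (x 0) (x N)) := by
  rw [integrableOn_Icc_iff_integrableOn_Ico]
  obtain ⟨M, hM⟩ := hfb
  refine ⟨(aemeasurable_restrict_Ico_of_fractal hx hα hq ⟨M, hM⟩ hfe).aestronglyMeasurable,
    HasFiniteIntegral.restrict_of_bounded M measure_Ico_lt_top ?_⟩
  exact ae_restrict_of_forall_mem measurableSet_Ico fun t ht => hM t (Ico_subset_Icc_self ht)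

theorem intervalIntegrable_pow_mul_piece (hx : ∀ i, i < N → x i < x (i + 1)) {i : ℕ}
    (hi : i < N) (hqi : ContinuousOn (q i) (Icc (x 0) (x N)))
    (hQf : ∀ t ∈ Ico (x i) (x (i + 1)), Qf t = q i (LmInv x N i t)) (m : ℕ) :
    IntervalIntegrable (fun t => t ^ m * Qf t) volume (x i) (x (i + 1)) := by
  have hle := (hx i hi).le
  refine ContinuousOn.intervalIntegrable (u := fun t => t ^ m * q i (LmInv x N i t)) ?_
    |>.congr_uIoo ?_
  · rw [uIcc_of_le hle]
    exact (continuous_pow m).continuousOn.mul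
      (hqi.comp (continuous_LmInv i).continuousOn (mapsTo_LmInv_Icc hx hi))
  · rw [uIoo_of_le hle]
    intro t ht
    simp only [hQf t (Ioo_subset_Ico_self ht)]

theorem integral_pow_mul_fractal_piece (hx : ∀ i, i < N → x i < x (i + 1)) {i : ℕ}
    (hi : i < N) (hf : IntegrableOn f (Icc (x 0) (x N)))
    (hqi : ContinuousOn (q i) (Icc (x 0) (x N)))
    (hfe : ∀ t ∈ Ico (x 0) (x N), f (Lm x N i t) = α i * f t + q i t)
    (hQf : ∀ t ∈ Ico (x i) (x (i + 1)), Qf t = q i (LmInv x N i t)) (m : ℕ) :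
    ∫ t in x i..x (i + 1), t ^ m * f t =
      ∑ k ∈ Finset.range (m + 1), (m.choose k : ℝ) * (∫ t in x 0..x N, t ^ k * f t) *
        (α i * aC x N i ^ (k + 1) * bC x N i ^ (m - k)) +
      ∫ t in x i..x (i + 1), t ^ m * Qf t := by
  have h0N := partition_lt hx (Nat.zero_lt_of_lt hi) le_rfl
  have hfI : IntervalIntegrable f volume (x 0) (x N) :=
    (intervalIntegrable_iff_integrableOn_Icc_of_le h0N.le).2 hf
  have hqI : IntervalIntegrable (fun s => Lm x N i s ^ m * q i s) volume (x 0) (x N) := by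
    refine ContinuousOn.intervalIntegrable ?_
    rw [uIcc_of_le h0N.le]
    exact ((continuous_Lm i).pow m).continuousOn.mul hqi
  have hsplit : ∫ s in x 0..x N, Lm x N i s ^ m * (α i * f s + q i s) =
      α i * (∫ s in x 0..x N, Lm x N i s ^ m * f s) + ∫ s in x 0..x N, Lm x N i s ^ m * q i s := by
    rw [← intervalIntegral.integral_const_mul, ← intervalIntegral.integral_add _ hqI]
    · exact intervalIntegral.integral_congr fun s _ => by ring
    · exact (hfI.continuousOn_mul ((continuous_Lm i).pow m).continuousOn).const_mul _
  rw [integral_pow_mul_piece_eq h0N i (h := fun s => α i * f s + q i s)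
      fun s hs => hfe s (Ioo_subset_Ico_self hs),
    integral_pow_mul_piece_eq h0N i (g := Qf) (h := q i) fun s hs => by
      simp only [hQf _ (mapsTo_Lm_Ico hx hi (Ioo_subset_Ico_self hs)), LmInv_Lm (aC_pos hx hi).ne'],
    hsplit]
  simp only [Lm]
  rw [integral_affine_pow_mul hfI, mul_add, Finset.mul_sum, Finset.mul_sum]
  congr 1
  exact Finset.sum_congr rfl fun k _ => by ring

theorem integral_pow_mul_fractal (hx : ∀ i, i < N → x i < x (i + 1))
    (hf : IntegrableOn f (Icc (x 0) (x N)))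
    (hq : ∀ i, i < N → ContinuousOn (q i) (Icc (x 0) (x N)))
    (hfe : ∀ i, i < N → ∀ t ∈ Ico (x 0) (x N), f (Lm x N i t) = α i * f t + q i t)
    (hQf : ∀ i, i < N → ∀ t ∈ Ico (x i) (x (i + 1)), Qf t = q i (LmInv x N i t)) (m : ℕ) :
    ∫ t in x 0..x N, t ^ m * f t =
      ∑ k ∈ Finset.range (m + 1), (m.choose k : ℝ) * (∫ t in x 0..x N, t ^ k * f t) *
        ∑ i ∈ Finset.range N, α i * aC x N i ^ (k + 1) * bC x N i ^ (m - k) +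
      ∫ t in x 0..x N, t ^ m * Qf t := by
  have hfm : IntegrableOn (fun t => t ^ m * f t) (Icc (x 0) (x N)) :=
    hf.continuousOn_mul (continuous_pow m).continuousOn isCompact_Icc
  have hfI : ∀ i < N, IntervalIntegrable (fun t => t ^ m * f t) volume (x i) (x (i + 1)) :=
    fun i hi => (intervalIntegrable_iff_integrableOn_Icc_of_le (hx i hi).le).2
      (hfm.mono_set (Icc_succ_subset hx hi))
  rw [← intervalIntegral.sum_integral_adjacent_intervals hfI,
    ← intervalIntegral.sum_integral_adjacent_intervals fun i hi =>
      intervalIntegrable_pow_mul_piece hx hi (hq i hi) (hQf i hi) m,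
    Finset.sum_congr rfl fun i hi => integral_pow_mul_fractal_piece hx (Finset.mem_range.1 hi)
      hf (hq i (Finset.mem_range.1 hi)) (hfe i (Finset.mem_range.1 hi))
      (hQf i (Finset.mem_range.1 hi)) m,
    Finset.sum_add_distrib, Finset.sum_comm]
  simp only [Finset.mul_sum]

end Fractal

theorem stmt13_general
    (N : ℕ) (hN : 2 ≤ N)
    (x : ℕ → ℝ)
    (hx : ∀ i, i < N → x i < x (i + 1))
    (α : ℕ → ℝ) (hα : ∀ i, i < N → |α i| < 1)
    (q : ℕ → ℝ → ℝ)
    (hq : ∀ i, i < N → ∃ C, ∀ u ∈ Icc (x 0) (x N), ∀ v ∈ Icc (x 0) (x N),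
      |q i u - q i v| ≤ C * |u - v|)
    (f : ℝ → ℝ)
    (hfb : ∃ M, ∀ t ∈ Icc (x 0) (x N), |f t| ≤ M)
    (hfe : ∀ i, i < N → ∀ t ∈ Ico (x 0) (x N), f (Lm x N i t) = α i * f t + q i t)
    (Qf : ℝ → ℝ)
    (hQf : ∀ i, i < N → ∀ t ∈ Ico (x i) (x (i + 1)), Qf t = q i (LmInv x N i t)) :
    ∀ m : ℕ, 1 ≤ m →
      (1 - ∑ i ∈ Finset.range N, α i * aC x N i ^ (m + 1)) ≠ 0 ∧
      ∫ t in (x 0)..(x N), t ^ m * f t =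
        ((∑ k ∈ Finset.range m, (m.choose k : ℝ) * (∫ t in (x 0)..(x N), t ^ k * f t) *
            ∑ i ∈ Finset.range N, α i * aC x N i ^ (k + 1) * bC x N i ^ (m - k)) +
          ∫ t in (x 0)..(x N), t ^ m * Qf t) /
        (1 - ∑ i ∈ Finset.range N, α i * aC x N i ^ (m + 1)) := by
  intro m _
  have hN0 : 0 < N := by omega
  have hqc : ∀ i, i < N → ContinuousOn (q i) (Icc (x 0) (x N)) := fun i hi => by
    obtain ⟨C, hC⟩ := hq i hi
    exact (LipschitzOnWith.of_dist_le' (K := C) fun u hu v hv => by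
      simpa only [Real.dist_eq] using hC u hu v hv).continuousOn
  have hden : 1 - ∑ i ∈ Finset.range N, α i * aC x N i ^ (m + 1) ≠ 0 :=
    (sub_pos.2 (abs_lt.1 (abs_sum_mul_pow_lt_one ⟨0, Finset.mem_range.2 hN0⟩
      (fun i hi => aC_pos hx (Finset.mem_range.1 hi)) (sum_aC hx hN0)
      (fun i hi => hα i (Finset.mem_range.1 hi)) m)).2).ne'
  refine ⟨hden, (eq_div_iff hden).2 ?_⟩
  have hrec := integral_pow_mul_fractal hx (integrableOn_Icc_of_fractal hx hα hqc hfb hfe) hqc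
    hfe hQf m
  simp only [Finset.sum_range_succ _ m, Nat.choose_self, Nat.cast_one, one_mul, Nat.sub_self,
    pow_zero, mul_one] at hrec
  linear_combination hrec

/-- Recursion for the moments `f_m = ∫ x^m f(x) dx` of the bounded fractal function in terms of
the lower moments and the moments of `Q(x) = q i (L i⁻¹ x)` on `I_i`. -/
theorem stmt13
    (N : ℕ) (hN : 2 ≤ N)
    (x : ℕ → ℝ)
    (hx : ∀ i, i < N → x i < x (i + 1))
    (α : ℕ → ℝ) (hα : ∀ i, i < N → |α i| < 1)
    (q : ℕ → ℝ → ℝ)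
    (hq : ∀ i, i < N → ∃ C, ∀ u ∈ Icc (x 0) (x N), ∀ v ∈ Icc (x 0) (x N),
      |q i u - q i v| ≤ C * |u - v|)
    (f : ℝ → ℝ)
    (hfb : ∃ M, ∀ t ∈ Icc (x 0) (x N), |f t| ≤ M)
    (hfe : ∀ i, i < N → ∀ t ∈ Ico (x 0) (x N), f (Lm x N i t) = α i * f t + q i t)
    (hfeN : f (Lm x N (N - 1) (x N)) = α (N - 1) * f (x N) + q (N - 1) (x N))
    (Qf : ℝ → ℝ)
    (hQf : ∀ i, i < N → ∀ t ∈ Ico (x i) (x (i + 1)), Qf t = q i (LmInv x N i t))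
    (hQfN : Qf (x N) = q (N - 1) (LmInv x N (N - 1) (x N))) :
    ∀ m : ℕ, 1 ≤ m →
      (1 - ∑ i ∈ Finset.range N, α i * aC x N i ^ (m + 1)) ≠ 0 ∧
      ∫ t in (x 0)..(x N), t ^ m * f t =
        ((∑ k ∈ Finset.range m, (m.choose k : ℝ) * (∫ t in (x 0)..(x N), t ^ k * f t) *
            ∑ i ∈ Finset.range N, α i * aC x N i ^ (k + 1) * bC x N i ^ (m - k)) +
          ∫ t in (x 0)..(x N), t ^ m * Qf t) /
        (1 - ∑ i ∈ Finset.range N, α i * aC x N i ^ (m + 1)) :=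
  stmt13_general N hN x hx α hα q hq f hfb hfe Qf hQf
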